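/- arXiv:math/9902127 — 2 statements merged into one kernel-verified Lean document; each statement's English description precedes it below -/
import Mathlib

section
/- Let 𝔤 be a Lie algebra over a field K and let k ≥ 1. On the vector space V = 𝔤 × Kᵏ define a (k+2)-linear alternating bracket determined by: [(y₁,0),(y₂,0),(0,e₁),…,(0,eₖ)] = ([y₁,y₂]_𝔤, 0) for y₁,y₂ ∈ 𝔤, where e₁,…,eₖ is the standard basis of Kᵏ, and all other brackets of basis-type elements obtained from elements of 𝔤×{0} and {0}×Kᵏ vanish unless exactly two arguments lie in 𝔤×{0} and the remaining k arguments span {0}×Kᵏ. Then this bracket satisfies the Filippov identity, making V a Filippov (k+2)-algebra. -/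
/-!
The identity says that every map `D_f = B (f₁, …, f_{k+1}, ·)` acts as a derivation of `B`. Both
sides are multilinear, so `f` and `g` may be taken from a basis of `𝔤 × Kᵏ` whose vectors lie in
`𝔤 × 0` or in `0 × Kᵏ`. On such a tuple `B` vanishes unless exactly two entries lie in `𝔤 × 0`: with
fewer, more than `k` entries lie in `0 × Kᵏ` and are linearly dependent; with more, by hypothesis.
Hence `D_f` either kills `𝔤 × 0` and maps into it, and is a derivation by the same count, or, when
exactly one entry `x` of `f` lies in `𝔤`, it is a multiple of `ad x` on `𝔤` and zero on `Kᵏ`, and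
is a derivation by the Jacobi identity.
-/

/-- The Filippov (fundamental) identity for an `(n+1)`-ary alternating bracket. -/
def FilippovIdentity {K V : Type*} [Field K] [AddCommGroup V] [Module K V] {n : ℕ}
    (B : AlternatingMap K V V (Fin (n + 1))) : Prop :=
  ∀ (f : Fin n → V) (g : Fin (n + 1) → V),
    B (Fin.snoc f (B g)) = ∑ i, B (Function.update g i (B (Fin.snoc f (g i))))

open scoped Classical

open Function Finset

namespace AlternatingMap

section Derivation

variable {R M N ι : Type*} [CommRing R] [AddCommGroup M] [Module R M] [AddCommGroup N]
  [Module R N] [Fintype ι] [DecidableEq ι]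

theorem sum_compLinearMap_update_apply (C : M [⋀^ι]→ₗ[R] N) (D : M →ₗ[R] M) (g : ι → M) :
    (∑ i, C.toMultilinearMap.compLinearMap (update (fun _ => LinearMap.id) i D)) g =
      ∑ i, C (update g i (D (g i))) := by
  simp only [_root_.sum_apply, MultilinearMap.compLinearMap_apply]
  refine sum_congr rfl fun i _ => congrArg C (funext fun j => ?_)
  rcases eq_or_ne j i with rfl | hji
  · simp
  · simp [update_of_ne hji]

def derivSum (C : M [⋀^ι]→ₗ[R] N) (D : M →ₗ[R] M) : M [⋀^ι]→ₗ[R] N where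
  toMultilinearMap := ∑ i, C.toMultilinearMap.compLinearMap (update (fun _ => LinearMap.id) i D)
  map_eq_zero_of_eq' g i j hg hij := by
    -- the terms at `i` and `j` cancel; every other term has equal entries at `i` and `j`
    refine (sum_compLinearMap_update_apply C D g).trans ?_
    rw [← sum_subset (subset_univ {i, j}), sum_pair hij]
    · have hswap : update g i (D (g i)) = update g j (D (g j)) ∘ Equiv.swap i j := by
        funext l
        rcases eq_or_ne l i with rfl | hli
        · simp [hg]
        rcases eq_or_ne l j with rfl | hlj
        · simp [hli, hg, update_of_ne hij]
        · simp [Equiv.swap_apply_of_ne_of_ne hli hlj, hli, hlj]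
      rw [hswap, C.map_swap _ hij, neg_add_cancel]
    · intro p _ hp
      simp only [mem_insert, mem_singleton, not_or] at hp
      refine C.map_eq_zero_of_eq _ ?_ hij
      simp [update_of_ne (Ne.symm hp.1), update_of_ne (Ne.symm hp.2), hg]

@[simp]
theorem derivSum_apply (C : M [⋀^ι]→ₗ[R] N) (D : M →ₗ[R] M) (g : ι → M) :
    C.derivSum D g = ∑ i, C (update g i (D (g i))) :=
  sum_compLinearMap_update_apply C D g

def IsDerivation (B : M [⋀^ι]→ₗ[R] M) (D : M →ₗ[R] M) : Prop :=
  D.compAlternatingMap B = B.derivSum D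

theorem map_eq_det_smul (e : Module.Basis ι R M) (C : M [⋀^ι]→ₗ[R] N) (v : ι → M) :
    C v = e.det v • C e := by
  suffices C = (LinearMap.toSpanSingleton R N (C e)).compAlternatingMap e.det from
    DFunLike.congr_fun this v
  refine e.ext_alternating fun w hw => ?_
  let σ := Equiv.ofBijective w (Finite.injective_iff_bijective.1 hw)
  change C (e ∘ σ) = (LinearMap.toSpanSingleton R N (C e)).compAlternatingMap e.det (e ∘ σ)
  simp [AlternatingMap.map_perm, Module.Basis.det_self]

theorem derivSum_cons_cons {n : ℕ} (C : M [⋀^Fin (n + 2)]→ₗ[R] N) (D : M →ₗ[R] M) (a b : M)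
    (t : Fin n → M) :
    C.derivSum D (Fin.cons a (Fin.cons b t)) =
      C (Fin.cons (D a) (Fin.cons b t)) + C (Fin.cons a (Fin.cons (D b) t)) +
        ∑ j, C (Fin.cons a (Fin.cons b (update t j (D (t j))))) := by
  simp [Fin.sum_univ_succ, Fin.update_cons_zero, ← Fin.cons_update, add_assoc]

end Derivation

theorem map_eq_zero_of_finrank_lt_card {K M N W ι : Type*} [Field K] [AddCommGroup M]
    [Module K M] [AddCommGroup N] [Module K N] [AddCommGroup W] [Module K W]
    [FiniteDimensional K W] (C : M [⋀^ι]→ₗ[K] N) (φ : W →ₗ[K] M) {v : ι → M} {S : Finset ι}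
    (hS : Module.finrank K W < #S) (hv : ∀ i ∈ S, v i ∈ LinearMap.range φ) : C v = 0 := by
  refine C.map_linearDependent v fun hli => hS.not_ge ?_
  choose w hw using fun i hi => LinearMap.mem_range.mp (hv i hi)
  have hw_li : LinearIndependent K fun i : S => w i i.2 := by
    refine LinearIndependent.of_comp φ ?_
    have heq : φ ∘ (fun i : S => w i i.2) = v ∘ (↑) := funext fun i => hw i i.2
    rw [heq]
    exact hli.comp _ Subtype.val_injective
  simpa using hw_li.fintype_card_le_finrank

end AlternatingMap

theorem filippovIdentity_of_isDerivation_basis {K V κ : Type*} [Field K] [AddCommGroup V]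
    [Module K V] {n : ℕ} (B : V [⋀^Fin (n + 1)]→ₗ[K] V) (e : Module.Basis κ K V)
    (h : ∀ v : Fin n → κ, B.IsDerivation (B.toMultilinearMap.curryRight (e ∘ v))) :
    FilippovIdentity B := by
  intro f g
  let bracketLeft : MultilinearMap K (fun _ : Fin n => V) V :=
    (LinearMap.applyₗ (B g)).compMultilinearMap B.toMultilinearMap.curryRight
  let bracketRight : MultilinearMap K (fun _ : Fin n => V) V :=
    ∑ i, (B.toMultilinearMap.toLinearMap g i ∘ₗ LinearMap.applyₗ (g i)).compMultilinearMap
      B.toMultilinearMap.curryRight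
  have hext : bracketLeft = bracketRight := by
    refine Module.Basis.ext_multilinear (fun _ => e) fun v => ?_
    have := congrArg (fun E => E g) (h v)
    simpa [bracketLeft, bracketRight, Function.comp_def] using this
  simpa [bracketLeft, bracketRight] using congrArg (fun E => E f) hext

theorem Equiv.Perm.exists_apply_eq_apply_eq {α : Type*} [DecidableEq α] {a b c d : α}
    (hab : a ≠ b) (hcd : c ≠ d) : ∃ σ : Equiv.Perm α, σ a = c ∧ σ b = d := by
  have hb : Equiv.swap a c b ≠ c := fun h =>
    hab ((Equiv.swap a c).injective (by simpa using h.symm))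
  refine ⟨Equiv.swap (Equiv.swap a c b) d * Equiv.swap a c, ?_, ?_⟩
  · simp [Equiv.swap_apply_of_ne_of_ne hb.symm hcd]
  · simp

section HomogeneousTuples

variable {A W : Type*} [Zero W]

def IsHomogeneous [Zero A] (w : A × W) : Prop := w.1 = 0 ∨ w.2 = 0

theorem IsHomogeneous.eq_mk_zero_snd [Zero A] {w : A × W} (hw : IsHomogeneous w) (h : w.2 ≠ 0) :
    w = (0, w.2) :=
  Prod.ext (hw.resolve_right h) rfl

theorem forall_isHomogeneous_update [Zero A] {ι : Type*} [DecidableEq ι] {g : ι → A × W}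
    (hg : ∀ j, IsHomogeneous (g j)) {w : A × W} (hw : IsHomogeneous w) (i : ι) :
    ∀ j, IsHomogeneous (update g i w j) :=
  (forall_update_iff g fun _ x => IsHomogeneous x).2 ⟨hw, fun j _ => hg j⟩

theorem forall_isHomogeneous_snoc [Zero A] {n : ℕ} {f : Fin n → A × W}
    (hf : ∀ j, IsHomogeneous (f j)) {w : A × W} (hw : IsHomogeneous w) :
    ∀ j, IsHomogeneous (Fin.snoc (α := fun _ => A × W) f w j) :=
  Fin.forall_fin_succ'.2 ⟨fun j => by simpa using hf j, by simpa using hw⟩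

variable {ι : Type*} [Fintype ι]

noncomputable def lieIndices (v : ι → A × W) : Finset ι :=
  univ.filter fun i => (v i).2 = 0

theorem mem_lieIndices {v : ι → A × W} {i : ι} : i ∈ lieIndices v ↔ (v i).2 = 0 := by
  simp [lieIndices]

theorem lieIndices_update [DecidableEq ι] (v : ι → A × W) (i : ι) {w : A × W} (hw : w.2 = 0) :
    lieIndices (update v i w) = insert i (lieIndices v) := by
  ext j
  rcases eq_or_ne j i with rfl | hji <;> simp [mem_lieIndices, update_of_ne, *]

theorem lieIndices_snoc {n : ℕ} (f : Fin n → A × W) (w : A × W) :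
    lieIndices (Fin.snoc f w : Fin (n + 1) → A × W) =
      if w.2 = 0 then insert (Fin.last n) ((lieIndices f).map Fin.castSuccEmb)
      else (lieIndices f).map Fin.castSuccEmb := by
  ext j
  induction j using Fin.lastCases <;> split_ifs <;> simp [mem_lieIndices, *]

theorem comp_perm_eq_cons_cons [Zero A] {n : ℕ} {v : Fin (n + 2) → A × W}
    (hv : ∀ i, IsHomogeneous (v i)) {β γ : Fin (n + 2)} (hA : lieIndices v = {β, γ})
    {τ : Equiv.Perm (Fin (n + 2))} (h0 : τ 0 = β) (h1 : τ 1 = γ) :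
    v ∘ τ = Fin.cons ((v β).1, 0) (Fin.cons ((v γ).1, 0) fun i => (0, (v (τ i.succ.succ)).2)) := by
  have hβ : (v β).2 = 0 := mem_lieIndices.mp (by simp [hA])
  have hγ : (v γ).2 = 0 := mem_lieIndices.mp (by simp [hA])
  funext p
  induction p using Fin.cases with
  | zero => simp [h0, Prod.ext_iff, hβ]
  | succ p =>
    induction p using Fin.cases with
    | zero => simp [Fin.succ_zero_eq_one, h1, Prod.ext_iff, hγ]
    | succ i =>
      have hi : τ i.succ.succ ∉ lieIndices v := by
        rw [hA, mem_insert, mem_singleton, ← h0, ← h1, τ.injective.eq_iff, τ.injective.eq_iff]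
        simp [Fin.succ_ne_zero, Fin.succ_succ_ne_one]
      rw [mem_lieIndices] at hi
      simpa using (hv _).eq_mk_zero_snd hi

end HomogeneousTuples

theorem Module.Basis.isHomogeneous_prod_apply {R A W ιA ιW : Type*} [Semiring R]
    [AddCommMonoid A] [Module R A] [AddCommMonoid W] [Module R W]
    (b : Module.Basis ιA R A) (b' : Module.Basis ιW R W) (p : ιA ⊕ ιW) :
    IsHomogeneous (b.prod b' p) := by
  rcases p with i | j
  · exact Or.inr (b.prod_apply_inl_snd b' i)
  · exact Or.inl (b.prod_apply_inr_fst b' j)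

section LieTimesVolume

variable {K L : Type*} [Field K] [LieRing L] [Module K L] {k : ℕ}

structure IsLieTimesVolume
    (B : AlternatingMap K (L × (Fin k → K)) (L × (Fin k → K)) (Fin (k + 2))) : Prop where
  map_cons_cons (y z : L) (b : Fin k → Fin k → K) :
    B (Fin.cons (y, 0) (Fin.cons (z, 0) fun i => (0, b i))) =
      (Pi.basisFun K (Fin k)).det b • (⁅y, z⁆, 0)
  map_eq_zero_of_two_lt_card_lieIndices {v : Fin (k + 2) → L × (Fin k → K)} :
    (∀ i, IsHomogeneous (v i)) → 2 < #(lieIndices v) → B v = 0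

theorem isLieTimesVolume_of_basis_values
    {B : AlternatingMap K (L × (Fin k → K)) (L × (Fin k → K)) (Fin (k + 2))}
    (h1 : ∀ y₁ y₂ : L,
      B (Fin.cons (y₁, 0) (Fin.cons (y₂, 0) (fun i : Fin k => ((0 : L), Pi.single i (1 : K)))))
        = (⁅y₁, y₂⁆, 0))
    (h2 : ∀ v : Fin (k + 2) → L × (Fin k → K),
      (∀ i, (v i).1 = 0 ∨ (v i).2 = 0) →
      ¬ ((Finset.univ.filter fun i => (v i).1 ≠ 0 ∧ (v i).2 = 0).card = 2 ∧
          Submodule.span K ((fun i => (v i).2) '' {i | (v i).1 = 0}) = ⊤) →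
      B v = 0) :
    IsLieTimesVolume B where
  map_cons_cons y z b := by
    let C := ((B.curryLeft (y, 0)).curryLeft (z, 0)).compLinearMap (LinearMap.inr K L (Fin k → K))
    have hC : C (Pi.basisFun K (Fin k)) = (⁅y, z⁆, 0) := by
      change B (Fin.cons (y, 0) (Fin.cons (z, 0) fun i => (0, Pi.basisFun K (Fin k) i))) = _
      simpa only [Pi.basisFun_apply] using h1 y z
    rw [← hC]
    exact C.map_eq_det_smul (Pi.basisFun K (Fin k)) b
  map_eq_zero_of_two_lt_card_lieIndices {v} hv hcard := by
    by_cases hzero : ∃ i, v i = 0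
    · obtain ⟨i, hi⟩ := hzero
      exact B.map_coord_zero i hi
    have hfilter : (univ.filter fun i => (v i).1 ≠ 0 ∧ (v i).2 = 0) = lieIndices v := by
      ext i
      simp only [mem_filter, mem_univ, true_and, mem_lieIndices]
      exact ⟨And.right, fun h => ⟨fun h' => hzero ⟨i, Prod.ext h' h⟩, h⟩⟩
    refine h2 v hv fun ⟨h, _⟩ => ?_
    rw [hfilter] at h
    omega

variable {B : AlternatingMap K (L × (Fin k → K)) (L × (Fin k → K)) (Fin (k + 2))}
variable {N : Type*} [AddCommGroup N] [Module K N]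

theorem AlternatingMap.ext_isHomogeneous {ι : Type*} [Finite ι]
    {E E' : AlternatingMap K (L × (Fin k → K)) N ι}
    (h : ∀ v : ι → L × (Fin k → K), (∀ i, IsHomogeneous (v i)) → E v = E' v) : E = E' :=
  ((Module.Basis.ofVectorSpace K L).prod (Pi.basisFun K (Fin k))).ext_alternating fun v _ =>
    h _ fun i => Module.Basis.isHomogeneous_prod_apply _ _ (v i)

theorem AlternatingMap.map_eq_zero_of_card_lieIndices_le_one
    (E : AlternatingMap K (L × (Fin k → K)) N (Fin (k + 2))) {v : Fin (k + 2) → L × (Fin k → K)}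
    (hv : ∀ i, IsHomogeneous (v i)) (h : #(lieIndices v) ≤ 1) : E v = 0 := by
  refine E.map_eq_zero_of_finrank_lt_card (LinearMap.inr K L (Fin k → K)) (S := (lieIndices v)ᶜ)
    ?_ fun i hi => ⟨(v i).2, ?_⟩
  · rw [Module.finrank_fin_fun, card_compl, Fintype.card_fin]
    omega
  · rw [mem_compl, mem_lieIndices] at hi
    rw [LinearMap.inr_apply, ← (hv i).eq_mk_zero_snd hi]

theorem AlternatingMap.map_eq_zero_of_card_lieIndices_eq_two
    (E : AlternatingMap K (L × (Fin k → K)) N (Fin (k + 2)))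
    (hE : ∀ (y z : L) (b : Fin k → Fin k → K),
      E (Fin.cons (y, 0) (Fin.cons (z, 0) fun i => (0, b i))) = 0)
    {v : Fin (k + 2) → L × (Fin k → K)} (hv : ∀ i, IsHomogeneous (v i))
    (h : #(lieIndices v) = 2) : E v = 0 := by
  obtain ⟨β, γ, hβγ, hA⟩ := card_eq_two.mp h
  obtain ⟨τ, h0, h1⟩ := Equiv.Perm.exists_apply_eq_apply_eq Fin.zero_ne_one' hβγ
  have hperm := E.map_perm v τ
  rw [comp_perm_eq_cons_cons hv hA h0 h1, hE] at hperm
  exact (smul_eq_zero_iff_eq _).mp hperm.symm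

theorem IsLieTimesVolume.snd_apply_eq_zero (hB : IsLieTimesVolume B)
    (v : Fin (k + 2) → L × (Fin k → K)) : (B v).2 = 0 := by
  suffices (LinearMap.snd K L (Fin k → K)).compAlternatingMap B = 0 from
    congrArg (fun E => E v) this
  refine AlternatingMap.ext_isHomogeneous fun v hv => ?_
  obtain h | h | h : #(lieIndices v) ≤ 1 ∨ #(lieIndices v) = 2 ∨ 2 < #(lieIndices v) := by omega
  · exact AlternatingMap.map_eq_zero_of_card_lieIndices_le_one _ hv h
  · refine AlternatingMap.map_eq_zero_of_card_lieIndices_eq_two _ (fun y z b => ?_) hv h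
    simp [hB.map_cons_cons]
  · simp [hB.map_eq_zero_of_two_lt_card_lieIndices hv h]

theorem IsLieTimesVolume.exists_map_update_eq_smul_lie (hB : IsLieTimesVolume B)
    {v : Fin (k + 2) → L × (Fin k → K)} (hv : ∀ i, IsHomogeneous (v i)) {β γ : Fin (k + 2)}
    (hβγ : β ≠ γ) (hA : lieIndices v = {β, γ}) :
    ∃ c : K, ∀ y : L, B (update v γ (y, 0)) = c • (⁅(v β).1, y⁆, 0) := by
  obtain ⟨τ, h0, h1⟩ := Equiv.Perm.exists_apply_eq_apply_eq Fin.zero_ne_one' hβγ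
  refine ⟨(Equiv.Perm.sign τ : ℤ) • (Pi.basisFun K (Fin k)).det fun i => (v (τ i.succ.succ)).2,
    fun y => ?_⟩
  have hγ : γ ∈ lieIndices v := by simp [hA]
  have hA' : lieIndices (update v γ (y, 0)) = {β, γ} := by
    rw [lieIndices_update v γ rfl, insert_eq_of_mem hγ, hA]
  have hperm := B.map_perm (update v γ (y, 0)) τ
  rw [comp_perm_eq_cons_cons (forall_isHomogeneous_update hv (Or.inr rfl) γ) hA' h0 h1,
    hB.map_cons_cons] at hperm
  have hrest : ∀ i : Fin k, update v γ (y, 0) (τ i.succ.succ) = v (τ i.succ.succ) := fun i =>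
    update_of_ne (by rw [← h1, τ.injective.ne_iff]; exact Fin.succ_succ_ne_one i) _ _
  simp only [hrest, update_self, update_of_ne hβγ] at hperm
  rw [smul_assoc, ← Units.smul_def, hperm, smul_smul, Int.units_mul_self, one_smul]

theorem IsLieTimesVolume.apply_map_eq_derivSum_of_two_lt_card (hB : IsLieTimesVolume B)
    {D : (L × (Fin k → K)) →ₗ[K] L × (Fin k → K)} (hD : ∀ w, (D w).2 = 0)
    {g : Fin (k + 2) → L × (Fin k → K)} (hg : ∀ i, IsHomogeneous (g i))
    (h : 2 < #(lieIndices g)) : D (B g) = B.derivSum D g := by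
  rw [hB.map_eq_zero_of_two_lt_card_lieIndices hg h, map_zero, AlternatingMap.derivSum_apply,
    eq_comm]
  refine sum_eq_zero fun i _ =>
    hB.map_eq_zero_of_two_lt_card_lieIndices (forall_isHomogeneous_update hg (Or.inr (hD _)) i) ?_
  rw [lieIndices_update _ _ (hD _)]
  exact h.trans_le (card_le_card (subset_insert _ _))

theorem IsLieTimesVolume.isDerivation_of_card_eq_two (hB : IsLieTimesVolume B)
    {D : (L × (Fin k → K)) →ₗ[K] L × (Fin k → K)} (hD : ∀ w, (D w).2 = 0)
    (h2 : ∀ g : Fin (k + 2) → L × (Fin k → K), (∀ i, IsHomogeneous (g i)) →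
      #(lieIndices g) = 2 → D (B g) = B.derivSum D g) :
    B.IsDerivation D := by
  refine AlternatingMap.ext_isHomogeneous fun g hg => ?_
  obtain h | h | h : #(lieIndices g) ≤ 1 ∨ #(lieIndices g) = 2 ∨ 2 < #(lieIndices g) := by omega
  · rw [AlternatingMap.map_eq_zero_of_card_lieIndices_le_one _ hg h,
      AlternatingMap.map_eq_zero_of_card_lieIndices_le_one _ hg h]
  · exact h2 g hg h
  · exact hB.apply_map_eq_derivSum_of_two_lt_card hD hg h

theorem IsLieTimesVolume.isDerivation_of_map_inl_eq_zero (hB : IsLieTimesVolume B)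
    {D : (L × (Fin k → K)) →ₗ[K] L × (Fin k → K)} (hD : ∀ w, (D w).2 = 0)
    (hD0 : ∀ y : L, D (y, 0) = 0) : B.IsDerivation D := by
  refine hB.isDerivation_of_card_eq_two hD fun g hg h => ?_
  have hBg : B g = ((B g).1, 0) := Prod.ext rfl (hB.snd_apply_eq_zero g)
  rw [hBg, hD0, AlternatingMap.derivSum_apply, eq_comm]
  refine sum_eq_zero fun i _ => ?_
  by_cases hi : i ∈ lieIndices g
  · have hgi : g i = ((g i).1, 0) := Prod.ext rfl (mem_lieIndices.mp hi)
    rw [hgi, hD0, B.map_update_zero]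
  · refine hB.map_eq_zero_of_two_lt_card_lieIndices
      (forall_isHomogeneous_update hg (Or.inr (hD _)) i) ?_
    rw [lieIndices_update _ _ (hD _), card_insert_of_notMem hi, h]
    omega

theorem IsLieTimesVolume.isDerivation_of_map_inl_eq_smul_lie (hB : IsLieTimesVolume B)
    {D : (L × (Fin k → K)) →ₗ[K] L × (Fin k → K)} (c : K) (x : L)
    (hDL : ∀ y : L, D (y, 0) = c • (⁅x, y⁆, 0)) (hDW : ∀ u : Fin k → K, D (0, u) = 0) :
    B.IsDerivation D := by
  have hD : ∀ w, (D w).2 = 0 := fun w => by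
    rw [show w = (w.1, 0) + (0, w.2) by simp, map_add, hDL, hDW]
    simp
  refine hB.isDerivation_of_card_eq_two hD fun g hg h => sub_eq_zero.mp ?_
  refine (D.compAlternatingMap B - B.derivSum D).map_eq_zero_of_card_lieIndices_eq_two
    (fun y z b => ?_) hg h
  have hsmul0 : ∀ (a : K) (w : L × (Fin k → K)) (t : Fin (k + 1) → L × (Fin k → K)),
      B (Fin.cons (a • w) t) = a • B (Fin.cons w t) := fun a w t =>
    B.toMultilinearMap.cons_smul t a w
  have hsmul1 : ∀ (a : K) (v w : L × (Fin k → K)) (t : Fin k → L × (Fin k → K)),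
      B (Fin.cons v (Fin.cons (a • w) t)) = a • B (Fin.cons v (Fin.cons w t)) := fun a v w t =>
    (B.curryLeft v).toMultilinearMap.cons_smul t a w
  have hrest : ∑ j, B (Fin.cons (y, 0) (Fin.cons (z, 0)
      (update (fun i => ((0 : L), b i)) j (D (0, b j))))) = 0 :=
    sum_eq_zero fun j _ => B.map_coord_zero j.succ.succ (by simp [hDW])
  rw [AlternatingMap.sub_apply, LinearMap.compAlternatingMap_apply,
    AlternatingMap.derivSum_cons_cons, hrest, add_zero, hDL, hDL, hsmul0, hsmul1,
    hB.map_cons_cons, hB.map_cons_cons, hB.map_cons_cons, map_smul, hDL]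
  ext
  · simp only [Prod.fst_sub, Prod.fst_add, Prod.smul_fst, Prod.fst_zero]
    rw [leibniz_lie x y z]
    module
  · simp

theorem IsLieTimesVolume.isDerivation_curryRight (hB : IsLieTimesVolume B)
    {f : Fin (k + 1) → L × (Fin k → K)} (hf : ∀ i, IsHomogeneous (f i)) :
    B.IsDerivation (B.toMultilinearMap.curryRight f) := by
  have hD : ∀ w, (B.toMultilinearMap.curryRight f w).2 = 0 := fun w => hB.snd_apply_eq_zero _
  by_cases hp : #(lieIndices f) = 1
  · obtain ⟨α, hα⟩ := card_eq_one.mp hp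
    have hA : lieIndices (Fin.snoc f 0 : Fin (k + 2) → L × (Fin k → K)) =
        {α.castSucc, Fin.last (k + 1)} := by
      rw [lieIndices_snoc, if_pos Prod.snd_zero, hα, pair_comm]
      simp
    obtain ⟨c, hc⟩ := hB.exists_map_update_eq_smul_lie
      (forall_isHomogeneous_snoc hf (Or.inl rfl)) (Fin.castSucc_lt_last α).ne hA
    refine hB.isDerivation_of_map_inl_eq_smul_lie c (f α).1 (fun y => ?_) fun u => ?_
    · simpa [Fin.update_snoc_last] using hc y
    · by_cases hu : u = 0
      · subst hu
        exact map_zero (B.toMultilinearMap.curryRight f)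
      · refine AlternatingMap.map_eq_zero_of_card_lieIndices_le_one _
          (forall_isHomogeneous_snoc hf (Or.inl rfl)) ?_
        rw [lieIndices_snoc, if_neg hu, card_map, hp]
  · refine hB.isDerivation_of_map_inl_eq_zero hD fun y => ?_
    have hcard : #(lieIndices (Fin.snoc f (y, 0) : Fin (k + 2) → L × (Fin k → K))) =
        #(lieIndices f) + 1 := by
      rw [lieIndices_snoc, if_pos rfl, card_insert_of_notMem (by simp), card_map]
    have hy := forall_isHomogeneous_snoc hf (w := (y, 0)) (Or.inr rfl)
    obtain h | h : #(lieIndices f) = 0 ∨ 2 ≤ #(lieIndices f) := by omega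
    · exact AlternatingMap.map_eq_zero_of_card_lieIndices_le_one _ hy (by omega)
    · exact hB.map_eq_zero_of_two_lt_card_lieIndices hy (by omega)

end LieTimesVolume

theorem lie_times_volume_is_filippov_general {K L : Type*} [Field K]
    [LieRing L] [Module K L] {k : ℕ}
    (B : AlternatingMap K (L × (Fin k → K)) (L × (Fin k → K)) (Fin (k + 1 + 1)))
    (h1 : ∀ y₁ y₂ : L,
      B (Fin.cons (y₁, 0) (Fin.cons (y₂, 0) (fun i : Fin k => ((0 : L), Pi.single i (1 : K)))))
        = (⁅y₁, y₂⁆, 0))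
    (h2 : ∀ v : Fin (k + 2) → L × (Fin k → K),
      (∀ i, (v i).1 = 0 ∨ (v i).2 = 0) →
      ¬ ((Finset.univ.filter fun i => (v i).1 ≠ 0 ∧ (v i).2 = 0).card = 2 ∧
          Submodule.span K ((fun i => (v i).2) '' {i | (v i).1 = 0}) = ⊤) →
      B v = 0) :
    FilippovIdentity B := by
  have hB : IsLieTimesVolume B := isLieTimesVolume_of_basis_values h1 h2
  exact filippovIdentity_of_isDerivation_basis B
    ((Module.Basis.ofVectorSpace K L).prod (Pi.basisFun K (Fin k))) fun v =>
      hB.isDerivation_curryRight fun i => Module.Basis.isHomogeneous_prod_apply _ _ (v i)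

/-- On `V = 𝔤 × Kᵏ` the `(k+2)`-linear alternating bracket determined by
`[(y₁,0),(y₂,0),(0,e₁),…,(0,eₖ)] = ([y₁,y₂],0)`, and vanishing on tuples of elements of
`𝔤×{0} ∪ {0}×Kᵏ` unless exactly two arguments lie in `𝔤×{0}` (nontrivially) and the
remaining arguments span `{0}×Kᵏ`, satisfies the Filippov identity. -/
theorem lie_times_volume_is_filippov {K L : Type*} [Field K]
    [LieRing L] [Module K L] [LieAlgebra K L] {k : ℕ} (hk : 1 ≤ k)
    (B : AlternatingMap K (L × (Fin k → K)) (L × (Fin k → K)) (Fin (k + 1 + 1)))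
    (h1 : ∀ y₁ y₂ : L,
      B (Fin.cons (y₁, 0) (Fin.cons (y₂, 0) (fun i : Fin k => ((0 : L), Pi.single i (1 : K)))))
        = (⁅y₁, y₂⁆, 0))
    (h2 : ∀ v : Fin (k + 2) → L × (Fin k → K),
      (∀ i, (v i).1 = 0 ∨ (v i).2 = 0) →
      ¬ ((Finset.univ.filter fun i => (v i).1 ≠ 0 ∧ (v i).2 = 0).card = 2 ∧
          Submodule.span K ((fun i => (v i).2) '' {i | (v i).1 = 0}) = ⊤) →
      B v = 0) :
    FilippovIdentity B :=
  lie_times_volume_is_filippov_general B h1 h2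
end

section
/- Let V = ℝᵐ with m ≥ n ≥ 2, and let Λ = ∂₁∧…∧∂_{n−1} ∧ X where X = Σ_{i,j≥n} a_{ij} x_j ∂_i is a linear vector field in the variables x_n,…,x_m (a_{ij} ∈ ℝ). Then the n-bracket {f₁,…,fₙ} = ⟨Λ, df₁∧…∧dfₙ⟩ on linear functions on ℝᵐ satisfies the Filippov identity, i.e. Λ is a Filippov tensor. -/
/-!
Write `π c ∈ Rᵏ` for the coefficients of `x₁, …, xₖ` in a linear function `c`. Expanding the
defining determinant along its last column gives `{c₀, …, cₖ} = X w(c)` with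
`w(c) = ∑ ± det(π c_j)_{j ≠ i} • cᵢ`, and `π w(c) = 0` because this is the same expansion of a
determinant with a repeated column. Since `π ∘ X = 0`, every bracket `h` has `π h = 0`, and
placing such an `h` in slot `i` collapses the bracket to `± det(π c_j)_{j ≠ i} • X h`. Both sides
of the Filippov identity thereby become `X` applied to `{f, ·}`, which is linear in its last
slot, and both equal `det(π f) • X (X w(g))`.
-/

open Matrix

section SignedMinors

variable {R : Type*} [CommRing R] {k : ℕ}

def signedMinors (p : Fin (k + 1) → Fin k → R) (i : Fin (k + 1)) : R :=
  (-1) ^ (i + k : ℕ) * (of fun r => p (i.succAbove r)).det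

theorem det_of_snoc_col (p : Fin (k + 1) → Fin k → R) (u : Fin (k + 1) → R) :
    (of fun i => Fin.snoc (p i) (u i)).det = ∑ i, signedMinors p i * u i := by
  rw [det_succ_column _ (Fin.last k)]
  refine Finset.sum_congr rfl fun i _ => ?_
  simp only [signedMinors, submatrix, of_apply, Fin.val_last, Fin.snoc_last, Fin.succAbove_last,
    Fin.snoc_castSucc]
  ring

theorem sum_signedMinors_smul (p : Fin (k + 1) → Fin k → R) :
    ∑ i, signedMinors p i • p i = 0 := by
  ext j
  simp only [Finset.sum_apply, Pi.smul_apply, smul_eq_mul, Pi.zero_apply]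
  rw [← det_of_snoc_col]
  exact det_zero_of_column_eq (Fin.castSucc_lt_last j).ne fun i => by simp

theorem signedMinors_update_self (p : Fin (k + 1) → Fin k → R) (i : Fin (k + 1))
    (x : Fin k → R) : signedMinors (Function.update p i x) i = signedMinors p i := by
  simp [signedMinors]

theorem signedMinors_update_zero_of_ne (p : Fin (k + 1) → Fin k → R) {i j : Fin (k + 1)}
    (h : j ≠ i) : signedMinors (Function.update p i 0) j = 0 := by
  obtain ⟨r, rfl⟩ := Fin.exists_succAbove_eq h.symm
  rw [signedMinors, det_eq_zero_of_row_eq_zero r (by simp), mul_zero]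

theorem signedMinors_last (p : Fin (k + 1) → Fin k → R) :
    signedMinors p (Fin.last k) = (of fun r => p r.castSucc).det := by
  simp [signedMinors, ← two_mul]

theorem det_of_snoc_col_update_zero (p : Fin (k + 1) → Fin k → R) (u : Fin (k + 1) → R)
    (i : Fin (k + 1)) :
    (of fun l => Fin.snoc (Function.update p i 0 l) (u l)).det = signedMinors p i * u i := by
  rw [det_of_snoc_col, Finset.sum_eq_single i (fun j _ hj => by
    rw [signedMinors_update_zero_of_ne p hj, zero_mul]) (by simp), signedMinors_update_self]

theorem det_of_snoc_row_sum {β : Type*} [Fintype β] (A : Fin k → Fin (k + 1) → R)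
    (r : β → R) (x : β → Fin (k + 1) → R) :
    (of (Fin.snoc A (∑ l, r l • x l))).det = ∑ l, r l * (of (Fin.snoc A (x l))).det := by
  let L := (detRowAlternating (R := R)).toMultilinearMap.toLinearMap (Fin.snoc A 0) (Fin.last k)
  have hL (y : Fin (k + 1) → R) : (of (Fin.snoc A y)).det = L y := by
    change _ = detRowAlternating (Function.update (Fin.snoc A 0) (Fin.last k) y)
    rw [Fin.update_snoc_last]
    rfl
  simp only [hL, map_sum, map_smul, smul_eq_mul]

end SignedMinors

section NambuBracket

variable {R : Type*} [CommRing R] {ι : Type*} {k : ℕ}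
  (π : (ι → R) →ₗ[R] Fin k → R) (X : (ι → R) →ₗ[R] ι → R)

/-- `⟨∂₁ ∧ ⋯ ∧ ∂ₖ ∧ X, dc₀ ∧ ⋯ ∧ dcₖ⟩` for linear functions given by coefficient vectors
`cᵢ : ι → R`: `π` reads off the partial derivatives `∂₁, …, ∂ₖ`, and the linear vector field `X`
acts on coefficient vectors. -/
def nambuBracket (c : Fin (k + 1) → ι → R) : ι → R :=
  fun t => (of fun i => Fin.snoc (π (c i)) (X (c i) t)).det

theorem nambuBracket_eq (c : Fin (k + 1) → ι → R) :
    nambuBracket π X c = X (∑ i, signedMinors (fun i => π (c i)) i • c i) := by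
  ext t
  simp [nambuBracket, det_of_snoc_col, Finset.sum_apply, map_sum]

theorem map_nambuBracket_eq_zero (hX : π ∘ₗ X = 0) (c : Fin (k + 1) → ι → R) :
    π (nambuBracket π X c) = 0 := by
  rw [nambuBracket_eq, ← LinearMap.comp_apply, hX, LinearMap.zero_apply]

theorem nambuBracket_update (c : Fin (k + 1) → ι → R) (i : Fin (k + 1)) {h : ι → R}
    (hh : π h = 0) :
    nambuBracket π X (Function.update c i h) = signedMinors (fun j => π (c j)) i • X h := by
  ext t
  have hπ (l : Fin (k + 1)) :
      π (Function.update c i h l) = Function.update (fun j => π (c j)) i 0 l := by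
    rw [Function.apply_update (fun _ => π), hh]
  simp only [nambuBracket, hπ, det_of_snoc_col_update_zero, Function.update_self, Pi.smul_apply,
    smul_eq_mul]

theorem nambuBracket_snoc_of_eq_zero (f : Fin k → ι → R) {h : ι → R} (hh : π h = 0) :
    nambuBracket π X (Fin.snoc f h) = (of fun j => π (f j)).det • X h := by
  rw [← Fin.update_snoc_last (x := 0), nambuBracket_update π X _ _ hh, signedMinors_last]
  simp

theorem nambuBracket_snoc_sum {β : Type*} [Fintype β] (f : Fin k → ι → R) (r : β → R)
    (g : β → ι → R) :
    nambuBracket π X (Fin.snoc f (∑ l, r l • g l)) =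
      ∑ l, r l • nambuBracket π X (Fin.snoc f (g l)) := by
  ext t
  let row : (ι → R) → Fin (k + 1) → R := fun v => Fin.snoc (π v) (X v t)
  have hrow (v : ι → R) : (of fun i => row ((Fin.snoc f v : Fin (k + 1) → ι → R) i)) =
      of (Fin.snoc (fun j => row (f j)) (row v)) :=
    congrArg of (Fin.comp_snoc row f v)
  have hsum : row (∑ l, r l • g l) = ∑ l, r l • row (g l) := by
    ext j
    induction j using Fin.lastCases <;> simp [row, Finset.sum_apply]
  rw [Finset.sum_apply]
  show (of fun i => row ((Fin.snoc f (∑ l, r l • g l) : Fin (k + 1) → ι → R) i)).det =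
    ∑ l, r l * (of fun i => row ((Fin.snoc f (g l) : Fin (k + 1) → ι → R) i)).det
  simp only [hrow, hsum, det_of_snoc_row_sum]

theorem nambuBracket_filippov (hX : π ∘ₗ X = 0) (f : Fin k → ι → R)
    (g : Fin (k + 1) → ι → R) :
    nambuBracket π X (Fin.snoc f (nambuBracket π X g)) =
      ∑ i, nambuBracket π X (Function.update g i (nambuBracket π X (Fin.snoc f (g i)))) := by
  set κ := signedMinors fun i => π (g i)
  set w := ∑ i, κ i • g i
  have hw : π w = 0 := by simp [w, κ, map_sum, sum_signedMinors_smul]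
  calc nambuBracket π X (Fin.snoc f (nambuBracket π X g))
      = X ((of fun j => π (f j)).det • X w) := by
        rw [nambuBracket_snoc_of_eq_zero π X f (map_nambuBracket_eq_zero π X hX g),
          nambuBracket_eq, map_smul]
    _ = X (∑ i, κ i • nambuBracket π X (Fin.snoc f (g i))) := by
        rw [← nambuBracket_snoc_sum, nambuBracket_snoc_of_eq_zero π X f hw]
    _ = _ := by
        simp only [map_sum, map_smul,
          nambuBracket_update π X g _ (map_nambuBracket_eq_zero π X hX _), κ]

end NambuBracket

/-- Case (C) of Corollary 2: on `ℝᵐ` with `m ≥ n = N+2 ≥ 2`, the linear `n`-vector field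
`Λ = ∂₀ ∧ … ∧ ∂_{N} ∧ X`, where `X = ∑_{i,j ≥ N+1} a i j • x j • ∂ i` is a linear vector
field in the remaining variables, defines an `n`-bracket on linear functions
(represented by their coefficient vectors `c : Fin m → ℝ`, `f(x) = ∑ c i * x i`) by
`{f₁,…,fₙ}(x) = det (∂ⱼ fᵢ ∣ X(fᵢ))`, and this bracket satisfies the Filippov identity;
i.e. `Λ` is a Filippov tensor. -/
theorem linear_nambu_case_C_is_filippov {N m : ℕ} (hm : N + 2 ≤ m)
    (a : Fin m → Fin m → ℝ)
    (ha : ∀ i j : Fin m, ((i : ℕ) < N + 1 ∨ (j : ℕ) < N + 1) → a i j = 0)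
    (br : (Fin (N + 2) → Fin m → ℝ) → Fin m → ℝ)
    (hbr : ∀ (c : Fin (N + 2) → Fin m → ℝ) (t : Fin m),
      br c t = Matrix.det (Matrix.of fun i j : Fin (N + 2) =>
        if h : (j : ℕ) < N + 1 then c i ⟨(j : ℕ), by omega⟩
        else ∑ i' : Fin m, c i i' * a i' t)) :
    ∀ (f : Fin (N + 1) → Fin m → ℝ) (g : Fin (N + 2) → Fin m → ℝ),
      br (Fin.snoc f (br g)) = ∑ i, br (Function.update g i (br (Fin.snoc f (g i)))) := by
  let π : (Fin m → ℝ) →ₗ[ℝ] Fin (N + 1) → ℝ := LinearMap.funLeft ℝ ℝ (Fin.castLE (by omega))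
  have hX : π ∘ₗ vecMulLinear a = 0 := by
    refine LinearMap.ext fun c => funext fun j => ?_
    show ∑ i, c i * a i (Fin.castLE _ j) = 0
    exact Finset.sum_eq_zero fun i _ => by rw [ha i _ (Or.inr j.is_lt), mul_zero]
  -- `Fin.snoc` unfolds to exactly the `if (j : ℕ) < N + 1` of `hbr`.
  obtain rfl : br = nambuBracket π (vecMulLinear a) := funext fun c => funext (hbr c)
  exact nambuBracket_filippov π _ hX
end
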